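/- Let E be a finite-dimensional real inner product space and let A : E → E be a symmetric positive-definite continuous linear map. Let D be a finite index set of size n and, for each z ∈ D, let L_z(φ) = ½⟨φ, Aφ⟩ − ⟨b_z, φ⟩ be a quadratic per-sample loss with common Hessian A. Let θ₀ be the (unique) minimizer of the empirical risk R = (1/n) Σ_{z ∈ D} L_z, let U ⊆ D with u := |U| satisfying 0 < u < n, and let θ̂ be the unique minimizer of the remaining-data risk (1/(n−u)) Σ_{z ∈ D∖U} L_z. Define the FUDLR update Δθ := (1/n) A⁻¹ Σ_{z ∈ U} ∇L_z(θ₀). Then θ̂ − (θ₀ + Δθ) = (u/(n−u)) Δθ; in particular ‖θ̂ − (θ₀ + Δθ)‖ = (u/(n−u)) ‖Δθ‖, which is small relative to ‖Δθ‖ whenever u ≪ n. -/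

import Mathlib

/-!
With a common Hessian `A`, every average of the losses `L_z` is again a quadratic loss with
Hessian `A`, whose minimizer solves `A θ = (mean of the b_z)`; so Newton's step from `θ₀` for the
remaining-data risk is exact. As the gradients at `θ₀` sum to zero over `D`, that risk has
gradient `-(1/(n-u)) ∑_{z ∈ U} ∇L_z(θ₀)` at `θ₀`, whence `θ̂ = θ₀ + (n/(n-u)) Δθ`, and the gap is
`(n/(n-u) - 1) Δθ = (u/(n-u)) Δθ`.
-/

open scoped RealInnerProductSpace

section QuadraticLoss

variable {E : Type*} [NormedAddCommGroup E] [InnerProductSpace ℝ E]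

noncomputable def quadraticLoss (A : E →L[ℝ] E) (c φ : E) : ℝ :=
  1 / 2 * ⟪φ, A φ⟫ - ⟪c, φ⟫

variable {A : E →L[ℝ] E}

theorem hasGradientAt_quadraticLoss [CompleteSpace E] (hA : (A : E →ₗ[ℝ] E).IsSymmetric)
    (c θ : E) : HasGradientAt (quadraticLoss A c) (A θ - c) θ := by
  rw [hasGradientAt_iff_hasFDerivAt]
  have hquad := ((hasFDerivAt_id θ).inner ℝ A.hasFDerivAt).const_mul (1 / 2 : ℝ)
  have hlin := (hasFDerivAt_const c θ).inner ℝ (hasFDerivAt_id θ)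
  refine (hquad.sub hlin).congr_fderiv ?_
  ext v
  have hAθv : ⟪θ, A v⟫ = ⟪A θ, v⟫ := (hA θ v).symm
  simp only [id_eq, sub_apply, smul_apply, ContinuousLinearMap.comp_apply,
    ContinuousLinearMap.prod_apply, ContinuousLinearMap.id_apply, fderivInnerCLM_apply, hAθv,
    real_inner_comm v, smul_eq_mul, zero_apply, inner_zero_left, add_zero, map_sub,
    InnerProductSpace.toDual_apply_apply, sub_left_inj]
  ring

theorem apply_eq_of_forall_quadraticLoss_le [CompleteSpace E] (hA : (A : E →ₗ[ℝ] E).IsSymmetric)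
    {c θ : E} (hmin : ∀ φ, quadraticLoss A c θ ≤ quadraticLoss A c φ) : A θ = c := by
  have hlocal : IsLocalMin (quadraticLoss A c) θ := Filter.Eventually.of_forall hmin
  have hzero := hlocal.hasFDerivAt_eq_zero (hasGradientAt_quadraticLoss hA c θ).hasFDerivAt
  simpa [sub_eq_zero] using hzero

theorem average_quadraticLoss {ι : Type*} (F : Finset ι) (hF : F.Nonempty) (b : ι → E) (φ : E) :
    1 / (F.card : ℝ) * ∑ z ∈ F, quadraticLoss A (b z) φ
      = quadraticLoss A ((1 / (F.card : ℝ)) • ∑ z ∈ F, b z) φ := by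
  have hcard : (F.card : ℝ) ≠ 0 := by exact_mod_cast hF.card_pos.ne'
  simp only [quadraticLoss, Finset.sum_sub_distrib, Finset.sum_const, nsmul_eq_mul,
    ← sum_inner, real_inner_smul_left]
  field_simp

theorem apply_eq_average_of_forall_average_quadraticLoss_le [CompleteSpace E]
    (hA : (A : E →ₗ[ℝ] E).IsSymmetric) {ι : Type*} (F : Finset ι) (hF : F.Nonempty) (b : ι → E)
    {θ : E} (hmin : ∀ φ, 1 / (F.card : ℝ) * ∑ z ∈ F, quadraticLoss A (b z) θ
      ≤ 1 / (F.card : ℝ) * ∑ z ∈ F, quadraticLoss A (b z) φ) :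
    A θ = (1 / (F.card : ℝ)) • ∑ z ∈ F, b z := by
  simp only [average_quadraticLoss F hF] at hmin
  exact apply_eq_of_forall_quadraticLoss_le hA hmin

end QuadraticLoss

theorem fudlr_retraining_gap_general
    {E : Type*} [NormedAddCommGroup E] [InnerProductSpace ℝ E] [FiniteDimensional ℝ E]
    {ι : Type*} [DecidableEq ι] (D U : Finset ι) (hUD : U ⊆ D)
    (n u : ℕ) (hn : n = D.card) (hu : u = U.card) (hun : u < n)
    (A : E ≃L[ℝ] E)
    (hAsym : ∀ x y, ⟪(A : E →L[ℝ] E) x, y⟫ = ⟪x, (A : E →L[ℝ] E) y⟫)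
    (b : ι → E) (L : ι → E → ℝ)
    (hL : ∀ z φ, L z φ = (1 / 2) * ⟪φ, (A : E →L[ℝ] E) φ⟫ - ⟪b z, φ⟫)
    (R : E → ℝ) (hR : ∀ φ, R φ = (1 / (n : ℝ)) * ∑ z ∈ D, L z φ)
    (θ₀ : E) (hθ₀min : ∀ φ, R θ₀ ≤ R φ)
    (Rrem : E → ℝ)
    (hRrem : ∀ φ, Rrem φ = (1 / ((n : ℝ) - u)) * ∑ z ∈ D \ U, L z φ)
    (θhat : E) (hθhatmin : ∀ φ, Rrem θhat ≤ Rrem φ)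
    (Δθ : E) (hΔθ : Δθ = (1 / (n : ℝ)) • A.symm (∑ z ∈ U, gradient (L z) θ₀)) :
    θhat - (θ₀ + Δθ) = ((u : ℝ) / ((n : ℝ) - u)) • Δθ ∧
    ‖θhat - (θ₀ + Δθ)‖ = ((u : ℝ) / ((n : ℝ) - u)) * ‖Δθ‖ := by
  have hA : ((A : E →L[ℝ] E) : E →ₗ[ℝ] E).IsSymmetric := hAsym
  have hLq : L = fun z => quadraticLoss A (b z) := funext fun z => funext (hL z)
  have hnu : (0 : ℝ) < n - u := sub_pos.mpr (by exact_mod_cast hun)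
  have hn0 : (n : ℝ) ≠ 0 := (Nat.cast_pos.mpr (by omega)).ne'
  have hDrem : ((D \ U).card : ℝ) = n - u := by
    rw [Finset.card_sdiff_of_subset hUD, Nat.cast_sub (Finset.card_le_card hUD), hn, hu]
  have hAθ₀ : A θ₀ = (1 / (n : ℝ)) • ∑ z ∈ D, b z := by
    rw [hn]
    refine apply_eq_average_of_forall_average_quadraticLoss_le hA D
      (Finset.card_pos.mp (by omega)) b fun φ => ?_
    simpa only [hR, hLq, hn] using hθ₀min φ
  have hAθhat : A θhat = (1 / ((n : ℝ) - u)) • (∑ z ∈ D, b z - ∑ z ∈ U, b z) := by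
    rw [← hDrem, ← Finset.sum_sdiff_eq_sub hUD]
    refine apply_eq_average_of_forall_average_quadraticLoss_le hA (D \ U)
      (Finset.card_pos.mp (by exact_mod_cast hDrem ▸ hnu)) b fun φ => ?_
    simpa only [hRrem, hLq, ← hDrem] using hθhatmin φ
  have hgrad : ∑ z ∈ U, gradient (L z) θ₀ = (u : ℝ) • A θ₀ - ∑ z ∈ U, b z := by
    simp only [hLq, fun z => (hasGradientAt_quadraticLoss hA (b z) θ₀).gradient,
      Finset.sum_sub_distrib, Finset.sum_const, hu, Nat.cast_smul_eq_nsmul,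
      ContinuousLinearEquiv.coe_coe]
  have hgap : θhat - (θ₀ + Δθ) = ((u : ℝ) / ((n : ℝ) - u)) • Δθ := by
    apply A.injective
    simp only [map_sub, map_add, map_smul, hΔθ, A.apply_symm_apply, hgrad, hAθ₀, hAθhat]
    match_scalars <;> field_simp <;> ring
  refine ⟨hgap, ?_⟩
  rw [hgap, norm_smul, Real.norm_of_nonneg (div_nonneg (Nat.cast_nonneg u) hnu.le)]

/-- Gap between the FUDLR one-step estimate and true retraining in the quadratic
common-Hessian model: `θ̂ - (θ₀ + Δθ) = (u/(n-u)) • Δθ`, hence the gap is small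
relative to `‖Δθ‖` when `u ≪ n`. -/
theorem fudlr_retraining_gap
    {E : Type*} [NormedAddCommGroup E] [InnerProductSpace ℝ E] [FiniteDimensional ℝ E]
    {ι : Type*} [DecidableEq ι] (D U : Finset ι) (hUD : U ⊆ D)
    (n u : ℕ) (hn : n = D.card) (hu : u = U.card) (hu0 : 0 < u) (hun : u < n)
    (A : E ≃L[ℝ] E)
    (hAsym : ∀ x y, ⟪(A : E →L[ℝ] E) x, y⟫ = ⟪x, (A : E →L[ℝ] E) y⟫)
    (hApos : ∀ x, x ≠ 0 → 0 < ⟪x, (A : E →L[ℝ] E) x⟫)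
    (b : ι → E) (L : ι → E → ℝ)
    (hL : ∀ z φ, L z φ = (1 / 2) * ⟪φ, (A : E →L[ℝ] E) φ⟫ - ⟪b z, φ⟫)
    (R : E → ℝ) (hR : ∀ φ, R φ = (1 / (n : ℝ)) * ∑ z ∈ D, L z φ)
    (θ₀ : E) (hθ₀min : ∀ φ, R θ₀ ≤ R φ)
    (Rrem : E → ℝ)
    (hRrem : ∀ φ, Rrem φ = (1 / ((n : ℝ) - u)) * ∑ z ∈ D \ U, L z φ)
    (θhat : E) (hθhatmin : ∀ φ, Rrem θhat ≤ Rrem φ)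
    (Δθ : E) (hΔθ : Δθ = (1 / (n : ℝ)) • A.symm (∑ z ∈ U, gradient (L z) θ₀)) :
    θhat - (θ₀ + Δθ) = ((u : ℝ) / ((n : ℝ) - u)) • Δθ ∧
    ‖θhat - (θ₀ + Δθ)‖ = ((u : ℝ) / ((n : ℝ) - u)) * ‖Δθ‖ :=
  fudlr_retraining_gap_general D U hUD n u hn hu hun A hAsym b L hL R hR θ₀ hθ₀min Rrem hRrem θhat
    hθhatmin Δθ hΔθ
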